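/- For every prime p ≡ 1 (mod 3) and field K of characteristic p, in R = K[x,y,z]/(x^3+y^3+z^3) the element y² does not belong to the Frobenius closure of the ideal (x,z); while for p ≡ 2 (mod 3), y² does belong to the Frobenius closure of (x,z). -/

import Mathlib

open MvPolynomial in
/-- The ideal (x^3 + y^3 + z^3) in K[x,y,z]. -/
noncomputable def cubicIdeal (K : Type*) [Field K] : Ideal (MvPolynomial (Fin 3) K) :=
  Ideal.span {(X 0 : MvPolynomial (Fin 3) K) ^ 3 + X 1 ^ 3 + X 2 ^ 3}

/-- The ring K[x,y,z]/(x^3+y^3+z^3). -/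
noncomputable def CubicRing (K : Type*) [Field K] : Type _ :=
  MvPolynomial (Fin 3) K ⧸ cubicIdeal K

noncomputable instance (K : Type*) [Field K] : CommRing (CubicRing K) :=
  Ideal.Quotient.commRing (cubicIdeal K)

open MvPolynomial in
/-- The class of x in the cubic ring. -/
noncomputable def cx (K : Type*) [Field K] : CubicRing K := Ideal.Quotient.mk _ (X 0)

open MvPolynomial in
/-- The class of y in the cubic ring. -/
noncomputable def cy (K : Type*) [Field K] : CubicRing K := Ideal.Quotient.mk _ (X 1)

open MvPolynomial in
/-- The class of z in the cubic ring. -/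
noncomputable def cz (K : Type*) [Field K] : CubicRing K := Ideal.Quotient.mk _ (X 2)

/-!
Write `q = p ^ e`. If `q = 3t + 1`, the relation `y³ = -(x³ + z³)` gives
`y^{2q} = (x³ + z³)^{2t} y²`, and modulo `(x^q, z^q)` only the middle term of the binomial
expansion survives: `(x³ + z³)^{2t} ≡ C(2t, t) x^{3t} z^{3t}`. For `p ≡ 1 (mod 3)` every base-`p`
digit of `t` is `(p - 1)/3`, so by Lucas's theorem `p ∤ C(2t, t)`. Mapping `R` to the free
extension `K[x, z]/(x^q, z^q)[y]/(y³ + x³ + z³)`, with basis `1, y, y²`, the image of `y^{2q}` is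
a nonzero multiple of `y²` while `(x^q, z^q)` maps to zero.

For `p ≡ 2 (mod 3)`, `y^{2p} = -(x³ + z³)^{(2p-1)/3} y`, and every monomial of this power is
divisible by `x^p` or `z^p`.
-/

namespace Nat

variable {p : ℕ} [Fact p.Prime]

theorem not_dvd_centralBinom_add_mul {s t : ℕ} (hs : 2 * s < p) (hpt : ¬p ∣ centralBinom t) :
    ¬p ∣ centralBinom (s + p * t) := by
  have hp0 : 0 < p := (Fact.out : p.Prime).pos
  have lucas := Choose.choose_modEq_choose_mod_mul_choose_div_nat (p := p)
    (n := 2 * s + p * (2 * t)) (k := s + p * t)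
  rw [add_mul_mod_self_left, add_mul_mod_self_left, add_mul_div_left _ _ hp0,
    add_mul_div_left _ _ hp0, mod_eq_of_lt hs, mod_eq_of_lt (by omega), div_eq_of_lt hs,
    div_eq_of_lt (by omega), zero_add, zero_add, ← centralBinom_eq_two_mul_choose,
    ← centralBinom_eq_two_mul_choose, show 2 * s + p * (2 * t) = 2 * (s + p * t) by ring,
    ← centralBinom_eq_two_mul_choose] at lucas
  have hps : ¬p ∣ centralBinom s := by
    have := factorization_centralBinom_eq_zero_of_two_mul_lt hs
    simpa [factorization_eq_zero_iff, (Fact.out : p.Prime), centralBinom_ne_zero] using this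
  rw [lucas.dvd_iff dvd_rfl, (Fact.out : p.Prime).dvd_mul]
  exact not_or.2 ⟨hps, hpt⟩

theorem exists_three_mul_add_one_eq_pow_not_dvd_centralBinom (h3 : p % 3 = 1) (e : ℕ) :
    ∃ t, 3 * t + 1 = p ^ e ∧ ¬p ∣ centralBinom t := by
  induction e with
  | zero => exact ⟨0, rfl, by simpa using (Fact.out : p.Prime).one_lt.ne'⟩
  | succ e ih =>
    obtain ⟨t, ht, hdvd⟩ := ih
    have hs : 3 * ((p - 1) / 3) + 1 = p := by omega
    refine ⟨(p - 1) / 3 + p * t, ?_, not_dvd_centralBinom_add_mul (by omega) hdvd⟩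
    calc 3 * ((p - 1) / 3 + p * t) + 1 = (3 * ((p - 1) / 3) + 1) + 3 * t * p := by ring
      _ = p ^ (e + 1) := by rw [hs, pow_succ, ← ht]; ring

end Nat

theorem add_pow_two_mul_eq_centralBinom_mul {R : Type*} [CommSemiring R] {a b : R} {t : ℕ}
    (ha : a ^ (t + 1) = 0) (hb : b ^ (t + 1) = 0) :
    (a + b) ^ (2 * t) = Nat.centralBinom t * (a ^ t * b ^ t) := by
  have vanish {c : R} (hc : c ^ (t + 1) = 0) {i : ℕ} (hi : t + 1 ≤ i) : c ^ i = 0 :=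
    pow_eq_zero_of_le hi hc
  rw [add_pow, Finset.sum_eq_single t]
  · rw [Nat.centralBinom_eq_two_mul_choose, show 2 * t - t = t by omega]
    ring
  · intro i hi hit
    rcases (show t + 1 ≤ i ∨ t + 1 ≤ 2 * t - i by omega) with h | h
    · simp [vanish ha h]
    · simp [vanish hb h]
  · intro h
    exact absurd (Finset.mem_range.2 (by omega)) h

section CubeRelation

variable {R : Type*} [CommRing R] {x y z : R}

theorem sq_pow_eq_of_cube_add (h : x ^ 3 + y ^ 3 + z ^ 3 = 0) {q m r : ℕ}
    (hq : 2 * q = 3 * m + r) : (y ^ 2) ^ q = (-(x ^ 3 + z ^ 3)) ^ m * y ^ r := by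
  rw [← pow_mul, hq, pow_add, pow_mul, show y ^ 3 = -(x ^ 3 + z ^ 3) by linear_combination h]

theorem sq_pow_mem_span_pow_of_cube_add (h : x ^ 3 + y ^ 3 + z ^ 3 = 0) {q : ℕ} (hq : q % 3 = 2) :
    (y ^ 2) ^ q ∈ Ideal.span {x ^ q, z ^ q} := by
  have cube_pow_mem {w : R} (hw : w ^ q ∈ Ideal.span {x ^ q, z ^ q}) :
      (w ^ 3) ^ (q / 3 + 1) ∈ Ideal.span {x ^ q, z ^ q} := by
    rw [← pow_mul, show 3 * (q / 3 + 1) = q + 1 by omega, pow_succ]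
    exact Ideal.mul_mem_right _ _ hw
  rw [sq_pow_eq_of_cube_add h (m := 2 * (q / 3) + 1) (r := 1) (by omega), neg_pow]
  refine Ideal.mul_mem_right _ _ (Ideal.mul_mem_left _ _ ?_)
  refine Ideal.add_pow_mem_of_pow_mem_of_le _ (cube_pow_mem ?_) (cube_pow_mem ?_) (by omega)
  · exact Ideal.subset_span (Set.mem_insert _ _)
  · exact Ideal.subset_span (Set.mem_insert_of_mem _ rfl)

theorem sq_pow_eq_centralBinom_mul_of_cube_add (h : x ^ 3 + y ^ 3 + z ^ 3 = 0) {t : ℕ}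
    (hx : x ^ (3 * t + 1) = 0) (hz : z ^ (3 * t + 1) = 0) :
    (y ^ 2) ^ (3 * t + 1) = Nat.centralBinom t * (x ^ (3 * t) * z ^ (3 * t)) * y ^ 2 := by
  have cube_pow_eq_zero {w : R} (hw : w ^ (3 * t + 1) = 0) : (w ^ 3) ^ (t + 1) = 0 := by
    rw [← pow_mul, show 3 * (t + 1) = 3 * t + 1 + 2 by ring, pow_add, hw, zero_mul]
  rw [sq_pow_eq_of_cube_add h (m := 2 * t) (r := 2) (by ring), (even_two_mul t).neg_pow,
    add_pow_two_mul_eq_centralBinom_mul (cube_pow_eq_zero hx) (cube_pow_eq_zero hz),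
    ← pow_mul, ← pow_mul]

end CubeRelation

theorem AdjoinRoot.of_mul_root_pow_ne_zero {R : Type*} [CommRing R] {f : Polynomial R}
    (hf : f.Monic) {c : R} (hc : c ≠ 0) {k : ℕ} (hk : k < f.natDegree) :
    of f c * root f ^ k ≠ 0 := by
  rw [← mk_C, ← mk_X, ← map_pow, ← map_mul]
  refine mk_ne_zero_of_natDegree_lt hf ?_ (by rwa [Polynomial.natDegree_C_mul_X_pow k c hc])
  rwa [Polynomial.C_mul_X_pow_eq_monomial, Ne, Polynomial.monomial_eq_zero_iff]

open MvPolynomial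

theorem MvPolynomial.X_pow_mul_X_pow_notMem_span_pow (K : Type*) [Field K] {a q : ℕ} (h : a < q) :
    (X 0 ^ a * X 1 ^ a : MvPolynomial (Fin 2) K) ∉ Ideal.span {X 0 ^ q, X 1 ^ q} := by
  rw [X_pow_eq_monomial, X_pow_eq_monomial, X_pow_eq_monomial, X_pow_eq_monomial, monomial_mul,
    one_mul, show ({monomial (Finsupp.single 0 q) 1, monomial (Finsupp.single 1 q) 1} :
      Set (MvPolynomial (Fin 2) K)) = (fun s => monomial s 1) ''
        {Finsupp.single (0 : Fin 2) q, Finsupp.single 1 q} by simp [Set.image_insert_eq],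
    mem_ideal_span_monomial_image]
  intro hmem
  obtain ⟨s, hs, hle⟩ :=
    hmem (Finsupp.single 0 a + Finsupp.single 1 a) (mem_support_iff.2 (by simp))
  rcases hs with rfl | rfl
  · exact h.not_ge (by simpa using hle 0)
  · exact h.not_ge (by simpa using hle 1)

theorem CubicRing.exists_ringHom (K : Type*) [Field K] {S : Type*} [CommRing S] [Algebra K S]
    {a b c : S} (h : a ^ 3 + b ^ 3 + c ^ 3 = 0) :
    ∃ ψ : CubicRing K →+* S, ψ (cx K) = a ∧ ψ (cy K) = b ∧ ψ (cz K) = c := by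
  let φ : MvPolynomial (Fin 3) K →+* S := (aeval ![a, b, c]).toRingHom
  have hker : cubicIdeal K ≤ RingHom.ker φ := by
    rw [cubicIdeal, Ideal.span_singleton_le_iff_mem, RingHom.mem_ker]
    simpa [φ] using h
  refine ⟨Ideal.Quotient.lift _ φ hker, ?_, ?_, ?_⟩ <;>
    exact (Ideal.Quotient.lift_mk _ _ _).trans (by simp [φ])

theorem cx_pow_three_add_cy_pow_three_add_cz_pow_three (K : Type*) [Field K] :
    cx K ^ 3 + cy K ^ 3 + cz K ^ 3 = 0 :=
  Ideal.Quotient.eq_zero_iff_mem.2 (Ideal.subset_span rfl)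

abbrev TruncatedPlane (K : Type*) [Field K] (q : ℕ) : Type _ :=
  MvPolynomial (Fin 2) K ⧸ Ideal.span {(X 0 : MvPolynomial (Fin 2) K) ^ q, X 1 ^ q}

namespace TruncatedPlane

variable (K : Type*) [Field K] (q : ℕ)

noncomputable abbrev x : TruncatedPlane K q := Ideal.Quotient.mk _ (X 0)

noncomputable abbrev z : TruncatedPlane K q := Ideal.Quotient.mk _ (X 1)

theorem x_pow_eq_zero : x K q ^ q = 0 := by
  rw [← map_pow, Ideal.Quotient.eq_zero_iff_mem]
  exact Ideal.subset_span (Set.mem_insert _ _)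

theorem z_pow_eq_zero : z K q ^ q = 0 := by
  rw [← map_pow, Ideal.Quotient.eq_zero_iff_mem]
  exact Ideal.subset_span (Set.mem_insert_of_mem _ rfl)

theorem x_pow_mul_z_pow_ne_zero {a : ℕ} (h : a < q) : x K q ^ a * z K q ^ a ≠ 0 := by
  rw [← map_pow, ← map_pow, ← map_mul, Ne, Ideal.Quotient.eq_zero_iff_mem]
  exact X_pow_mul_X_pow_notMem_span_pow K h

noncomputable abbrev cubic : Polynomial (TruncatedPlane K q) :=
  .X ^ 3 + .C (x K q ^ 3 + z K q ^ 3)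

theorem cubic_monic : (cubic K q).Monic :=
  Polynomial.monic_X_pow_add (Polynomial.degree_C_le.trans_lt (by norm_num))

theorem of_x_pow_three_add_root_pow_three_add_of_z_pow_three :
    AdjoinRoot.of (cubic K q) (x K q) ^ 3 + AdjoinRoot.root (cubic K q) ^ 3 +
      AdjoinRoot.of (cubic K q) (z K q) ^ 3 = 0 :=
  calc _ = AdjoinRoot.mk (cubic K q) (cubic K q) := by
        rw [map_add, map_pow, AdjoinRoot.mk_X, AdjoinRoot.mk_C, map_add, map_pow, map_pow]
        ring
    _ = 0 := AdjoinRoot.mk_self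

end TruncatedPlane

open TruncatedPlane in
theorem cy_sq_pow_notMem_span (K : Type*) [Field K] {t : ℕ}
    (ht : (Nat.centralBinom t : K) ≠ 0) :
    (cy K ^ 2) ^ (3 * t + 1) ∉ Ideal.span {cx K ^ (3 * t + 1), cz K ^ (3 * t + 1)} := by
  set q := 3 * t + 1
  have hc :
      (Nat.centralBinom t : TruncatedPlane K q) * (x K q ^ (3 * t) * z K q ^ (3 * t)) ≠ 0 := by
    rw [← map_natCast (algebraMap K _), Ne, (ht.isUnit.map _).mul_right_eq_zero]
    exact x_pow_mul_z_pow_ne_zero K q (by omega)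
  have : Nontrivial (TruncatedPlane K q) := nontrivial_of_ne _ _ hc
  have hdeg : (cubic K q).natDegree = 3 := Polynomial.natDegree_X_pow_add_C
  have hroot := of_x_pow_three_add_root_pow_three_add_of_z_pow_three K q
  have hx : AdjoinRoot.of (cubic K q) (x K q) ^ q = 0 := by
    rw [← map_pow, x_pow_eq_zero, map_zero]
  have hz : AdjoinRoot.of (cubic K q) (z K q) ^ q = 0 := by
    rw [← map_pow, z_pow_eq_zero, map_zero]
  obtain ⟨ψ, hψx, hψy, hψz⟩ := CubicRing.exists_ringHom K hroot
  have hker : Ideal.span {cx K ^ q, cz K ^ q} ≤ RingHom.ker ψ := by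
    rw [Ideal.span_le]
    rintro _ (rfl | rfl) <;> simp [hψx, hψz, hx, hz]
  intro hmem
  have hzero := hker hmem
  rw [RingHom.mem_ker, map_pow, map_pow, hψy, sq_pow_eq_centralBinom_mul_of_cube_add hroot hx hz]
    at hzero
  refine AdjoinRoot.of_mul_root_pow_ne_zero (cubic_monic K q) hc (k := 2) (by omega) ?_
  rwa [map_mul, map_natCast, map_mul, map_pow, map_pow]

/-- In R = K[x,y,z]/(x^3+y^3+z^3) with char K = p prime: y² is not in the Frobenius
closure of (x,z) when p ≡ 1 (mod 3), and y² is in the Frobenius closure of (x,z)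
when p ≡ 2 (mod 3). -/
theorem frobeniusClosure_cubic {K : Type*} [Field K] (p : ℕ) (hp : p.Prime)
    [CharP K p] :
    (p % 3 = 1 → ¬ ∃ e : ℕ, (cy K ^ 2) ^ p ^ e ∈
        Ideal.span {cx K ^ p ^ e, cz K ^ p ^ e}) ∧
      (p % 3 = 2 → ∃ e : ℕ, (cy K ^ 2) ^ p ^ e ∈
        Ideal.span {cx K ^ p ^ e, cz K ^ p ^ e}) := by
  have : Fact p.Prime := ⟨hp⟩
  refine ⟨fun h3 ⟨e, hmem⟩ => ?_, fun h3 => ⟨1, ?_⟩⟩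
  · obtain ⟨t, ht, hdvd⟩ := Nat.exists_three_mul_add_one_eq_pow_not_dvd_centralBinom h3 e
    rw [← ht] at hmem
    exact cy_sq_pow_notMem_span K (by rwa [Ne, CharP.cast_eq_zero_iff K p]) hmem
  · rw [pow_one]
    exact sq_pow_mem_span_pow_of_cube_add (cx_pow_three_add_cy_pow_three_add_cz_pow_three K) h3
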